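/- Let M be an mtt and t ∈ T_Δ a fixed output tree, with run defined from M and t as in the context. Then for every s ∈ T_Σ: (s,t) ∈ τ_{IO,M} if and only if the triple (q0, (), t) — with the empty parameter vector and target t itself (the root subtree of t) — belongs to run(s). -/

import Mathlib

namespace MttF

/-- Finite ordered trees over a label type `α`. -/
inductive RTree (α : Type) : Type
  | node : α → List (RTree α) → RTree α

namespace RTree

variable {α β : Type}

/-- The root label of a tree. -/
def label : RTree α → α
  | node a _ => a

/-- The list of immediate subtrees of a tree. -/
def children : RTree α → List (RTree α)
  | node _ ts => ts

/-- Relabelling of trees. -/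
def map (f : α → β) : RTree α → RTree β
  | node a ts => node (f a) (ts.attach.map (fun x => map f x.1))
decreasing_by
  have := List.sizeOf_lt_of_mem x.2
  simp only [node.sizeOf_spec]
  omega

/-- A tree is well-formed with respect to a rank function if every node labeled
by a rank-`k` symbol has exactly `k` children. `T_Σ` is the set of well-formed
trees over `Σ`. -/
inductive Wf (rk : α → ℕ) : RTree α → Prop
  | node {a : α} {ts : List (RTree α)} :
      ts.length = rk a → (∀ t ∈ ts, Wf rk t) → Wf rk (node a ts)

/-- `Subtree u t` holds iff `u` is a subtree of `t` (rooted at some node of `t`). -/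
inductive Subtree : RTree α → RTree α → Prop
  | refl (t : RTree α) : Subtree t t
  | step {u c : RTree α} {a : α} {ts : List (RTree α)} :
      c ∈ ts → Subtree u c → Subtree u (node a ts)

end RTree

/-- Labels for output trees with parameters: trees over `Δ ∪ Y`. -/
inductive OLab (Δ : Type) : Type
  | out (d : Δ)
  | param (i : ℕ)

/-- Labels for right-hand sides of mtt rules: trees over `Δ ∪ (Q × X) ∪ Y`
(the second component of a call is the index of the input variable `x`). -/
inductive RLab (Δ Q : Type) : Type
  | out (d : Δ)
  | call (q : Q) (x : ℕ)
  | param (i : ℕ)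

/-- Labels for "semantic" trees over `Δ ∪ (Q × T_Σ) ∪ Y`. -/
inductive SLab (Γ Δ Q : Type) : Type
  | out (d : Δ)
  | call (q : Q) (s : RTree Γ)
  | param (i : ℕ)

/-- Trees over `Δ ∪ Y`. -/
abbrev OT (Δ : Type) := RTree (OLab Δ)
/-- Right-hand side trees over `Δ ∪ (Q × X) ∪ Y`. -/
abbrev Rhs (Δ Q : Type) := RTree (RLab Δ Q)
/-- Trees over `Δ ∪ (Q × T_Σ) ∪ Y`. -/
abbrev ST (Γ Δ Q : Type) := RTree (SLab Γ Δ Q)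

/-- First-order substitution `x_i := ss_i` on a label of a right-hand side
(indices are 0-based; for well-formed rules the index is always in range). -/
def RLab.subst {Γ Δ Q : Type} (ss : List (RTree Γ)) : RLab Δ Q → SLab Γ Δ Q
  | .out d => .out d
  | .param i => .param i
  | .call q x =>
    match ss[x]? with
    | some s => .call q s
    | none => .param x

/-- `r[x_1/s_1, …, x_k/s_k]`. -/
def substX {Γ Δ Q : Type} (ss : List (RTree Γ)) (r : Rhs Δ Q) : ST Γ Δ Q :=
  r.map (RLab.subst ss)

/-- Second-order (parameter) substitution `t[y_1/ts_1, …, y_n/ts_n]`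
(`y` indices are 0-based). -/
def substY {Δ : Type} (ts : List (OT Δ)) : OT Δ → OT Δ
  | .node (.param i) _ => ts.getD i (.node (.param i) [])
  | .node (.out d) us => .node (.out d) (us.attach.map (fun x => substY ts x.1))
decreasing_by
  have := List.sizeOf_lt_of_mem x.2
  simp only [RTree.node.sizeOf_spec]
  omega

/-- The embedding of `T_Δ` into the trees over `Δ ∪ Y`. -/
def embed {Δ : Type} (t : RTree Δ) : OT Δ := t.map OLab.out

variable {Γ Δ Q : Type}

/-- IO (call-by-value, inside-out) semantics: `SemIO rsel u t` holds iff
`t ∈ ⟦u⟧_IO`.  The rules of the transducer are given by a selector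
`rsel q σ ss`: the set of right-hand sides of the `⟨q,σ⟩`-rules that are
applicable when the children of the current input node are `ss` (for a plain
mtt this does not depend on `ss`, cf. `plainSel`). -/
inductive SemIO (rsel : Q → Γ → List (RTree Γ) → Set (Rhs Δ Q)) :
    ST Γ Δ Q → OT Δ → Prop
  | param (i : ℕ) :
      SemIO rsel (.node (.param i) []) (.node (.param i) [])
  | out {d : Δ} {us : List (ST Γ Δ Q)} {ts : List (OT Δ)}
      (hlen : ts.length = us.length)
      (h : ∀ i : Fin us.length, SemIO rsel (us.get i) (ts.get (i.cast hlen.symm))) :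
      SemIO rsel (.node (.out d) us) (.node (.out d) ts)
  | call {q : Q} {σ : Γ} {ss : List (RTree Γ)} {us : List (ST Γ Δ Q)}
      {r : Rhs Δ Q} {t₀ : OT Δ} {ts : List (OT Δ)}
      (hr : r ∈ rsel q σ ss)
      (h₀ : SemIO rsel (substX ss r) t₀)
      (hlen : ts.length = us.length)
      (h : ∀ i : Fin us.length, SemIO rsel (us.get i) (ts.get (i.cast hlen.symm))) :
      SemIO rsel (.node (.call q (.node σ ss)) us) (substY ts t₀)

mutual
/-- OI (call-by-name, outside-in) semantics: `SemOI rsel u t` holds iff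
`t ∈ ⟦u⟧_OI`. -/
inductive SemOI (rsel : Q → Γ → List (RTree Γ) → Set (Rhs Δ Q)) :
    ST Γ Δ Q → OT Δ → Prop
  | param (i : ℕ) :
      SemOI rsel (.node (.param i) []) (.node (.param i) [])
  | out {d : Δ} {us : List (ST Γ Δ Q)} {ts : List (OT Δ)}
      (hlen : ts.length = us.length)
      (h : ∀ i : Fin us.length, SemOI rsel (us.get i) (ts.get (i.cast hlen.symm))) :
      SemOI rsel (.node (.out d) us) (.node (.out d) ts)
  | call {q : Q} {σ : Γ} {ss : List (RTree Γ)} {us : List (ST Γ Δ Q)}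
      {r : Rhs Δ Q} {t₀ : OT Δ} {t : OT Δ}
      (hr : r ∈ rsel q σ ss)
      (h₀ : SemOI rsel (substX ss r) t₀)
      (hs : OISub rsel us t₀ t) :
      SemOI rsel (.node (.call q (.node σ ss)) us) t

/-- OI-substitution: `OISub rsel us t₀ t` holds iff `t ∈ (t₀ ←_OI (⟦us_1⟧_OI, …, ⟦us_n⟧_OI))`,
i.e. `t` is obtained from `t₀` by independently replacing every occurrence of a parameter
`y_i` by some member of `⟦us_i⟧_OI`. -/
inductive OISub (rsel : Q → Γ → List (RTree Γ) → Set (Rhs Δ Q)) :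
    List (ST Γ Δ Q) → OT Δ → OT Δ → Prop
  | param {us : List (ST Γ Δ Q)} {i : ℕ} {t : OT Δ}
      (h : i < us.length) (hsem : SemOI rsel (us.get ⟨i, h⟩) t) :
      OISub rsel us (.node (.param i) []) t
  | out {us : List (ST Γ Δ Q)} {d : Δ} {ts ts' : List (OT Δ)}
      (hlen : ts'.length = ts.length)
      (h : ∀ i : Fin ts.length, OISub rsel us (ts.get i) (ts'.get (i.cast hlen.symm))) :
      OISub rsel us (.node (.out d) ts) (.node (.out d) ts')
end

/-- The rule selector of a plain mtt: the applicable rules do not depend on the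
child subtrees of the current input node. -/
def plainSel (rules : Q → Γ → Set (Rhs Δ Q)) :
    Q → Γ → List (RTree Γ) → Set (Rhs Δ Q) :=
  fun q σ _ => rules q σ

/-- The translation `τ_{IO,M} ⊆ T_Σ × T_Δ` realized in IO mode. -/
def tauIO (rankΓ : Γ → ℕ) (rankΔ : Δ → ℕ)
    (rsel : Q → Γ → List (RTree Γ) → Set (Rhs Δ Q)) (q₀ : Q) :
    Set (RTree Γ × RTree Δ) :=
  {p | p.1.Wf rankΓ ∧ p.2.Wf rankΔ ∧
       SemIO rsel (.node (.call q₀ p.1) []) (embed p.2)}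

/-- The translation `τ_{OI,M} ⊆ T_Σ × T_Δ` realized in OI mode. -/
def tauOI (rankΓ : Γ → ℕ) (rankΔ : Δ → ℕ)
    (rsel : Q → Γ → List (RTree Γ) → Set (Rhs Δ Q)) (q₀ : Q) :
    Set (RTree Γ × RTree Δ) :=
  {p | p.1.Wf rankΓ ∧ p.2.Wf rankΔ ∧
       SemOI rsel (.node (.call q₀ p.1) []) (embed p.2)}

/-- Well-formedness of a right-hand side of a rule of an mtt whose current
input symbol has rank `k` and whose current state has rank `m`: output symbols
have the correct number of children, state calls `⟨q', x_i⟩` have `rank q'`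
children and `i < k`, and parameters `y_j` satisfy `j < m`. -/
inductive RhsWf (rankΔ : Δ → ℕ) (rankQ : Q → ℕ) (k m : ℕ) : Rhs Δ Q → Prop
  | out {d : Δ} {ts : List (Rhs Δ Q)}
      (hlen : ts.length = rankΔ d) (h : ∀ t ∈ ts, RhsWf rankΔ rankQ k m t) :
      RhsWf rankΔ rankQ k m (.node (.out d) ts)
  | call {q : Q} {x : ℕ} {ts : List (Rhs Δ Q)}
      (hx : x < k) (hlen : ts.length = rankQ q)
      (h : ∀ t ∈ ts, RhsWf rankΔ rankQ k m t) :
      RhsWf rankΔ rankQ k m (.node (.call q x) ts)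
  | param {i : ℕ} (hi : i < m) : RhsWf rankΔ rankQ k m (.node (.param i) [])

/-- Well-formedness of a tree over `Δ ∪ (Q × T_Σ) ∪ Y`. -/
inductive STWf (rankΓ : Γ → ℕ) (rankΔ : Δ → ℕ) (rankQ : Q → ℕ) : ST Γ Δ Q → Prop
  | out {d : Δ} {ts : List (ST Γ Δ Q)}
      (hlen : ts.length = rankΔ d) (h : ∀ t ∈ ts, STWf rankΓ rankΔ rankQ t) :
      STWf rankΓ rankΔ rankQ (.node (.out d) ts)
  | call {q : Q} {s : RTree Γ} {ts : List (ST Γ Δ Q)}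
      (hs : s.Wf rankΓ) (hlen : ts.length = rankQ q)
      (h : ∀ t ∈ ts, STWf rankΓ rankΔ rankQ t) :
      STWf rankΓ rankΔ rankQ (.node (.call q s) ts)
  | param (i : ℕ) : STWf rankΓ rankΔ rankQ (.node (.param i) [])

/-- A tree over `Δ ∪ (Q × T_Σ) ∪ Y` is parameter-free if no `y_i` occurs in it. -/
inductive NoParam : ST Γ Δ Q → Prop
  | node {l : SLab Γ Δ Q} {ts : List (ST Γ Δ Q)}
      (hl : ∀ i : ℕ, l ≠ .param i) (h : ∀ t ∈ ts, NoParam t) :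
      NoParam (.node l ts)

/-- A macro tree transducer `M = (Q, Σ, Δ, q₀, R)`.  The alphabets `Γ` (input),
`Δ` (output) and the set `Q` of states are ranked; `q₀` has rank `0`; `rules q σ`
is the (finite) set `R_{q,σ}` of right-hand sides of the `⟨q,σ⟩`-rules, and every
right-hand side is a well-formed tree over `Δ ∪ (Q × X_k) ∪ Y_m`. -/
structure MTT (Γ Δ Q : Type) where
  rankΓ : Γ → ℕ
  rankΔ : Δ → ℕ
  rankQ : Q → ℕ
  q₀ : Q
  q₀_rank : rankQ q₀ = 0
  rules : Q → Γ → Set (Rhs Δ Q)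
  rules_fin : ∀ q σ, (rules q σ).Finite
  rules_wf : ∀ q σ, ∀ r ∈ rules q σ, RhsWf rankΔ rankQ (rankΓ σ) (rankQ q) r

/-- The rule selector of a plain mtt. -/
def MTT.sel (M : MTT Γ Δ Q) : Q → Γ → List (RTree Γ) → Set (Rhs Δ Q) :=
  plainSel M.rules

end MttF
namespace MttF

/-- The set `V = V_t ∪ {⊥}`: `some w` stands for the subtree `w` of the fixed
output tree `t`, and `none` stands for `⊥`. -/
abbrev V (Δ : Type) := Option (RTree Δ)

/-- Triples `(q, v⃗, v') ∈ ⋃_i Q^{(i)} × V^i × V`. -/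
abbrev Trip (Δ Q : Type) := Q × List (V Δ) × V Δ

/-- `v` is a legitimate element of `V = V_t ∪ {⊥}` (for `some w`, `w` must be a
subtree of `t`). -/
def InV {Δ : Type} (t : RTree Δ) : V Δ → Prop
  | none => True
  | some w => RTree.Subtree w t

/-- `rhoRel t t' v` holds iff `ρ(t') = v`, where `ρ(t') = t'` if `t'` is a
subtree of `t` and `ρ(t') = ⊥` otherwise (here `t'` ranges over trees over
`Δ ∪ Y`, and subtrees of `t` are compared via the embedding of `T_Δ`). -/
def rhoRel {Δ : Type} (t : RTree Δ) (t' : OT Δ) : V Δ → Prop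
  | some w => RTree.Subtree w t ∧ embed w = t'
  | none => ¬ ∃ w : RTree Δ, RTree.Subtree w t ∧ embed w = t'

/-- `ρ(T)` for a set `T` of output trees. -/
def rhoImg {Δ : Type} (t : RTree Δ) (T : Set (OT Δ)) : Set (V Δ) :=
  {v | ∃ t' ∈ T, rhoRel t t' v}

/-- The predicate `f_{v⃗,a⃗}(r, v')` of the inverse-type construction for
IO-mtts, for the fixed output tree `t`. -/
inductive FPred {Δ Q : Type} (t : RTree Δ) (vs : List (V Δ))
    (aenv : List (Set (Trip Δ Q))) : Rhs Δ Q → V Δ → Prop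
  | param {i : ℕ} {v : V Δ} (h : vs[i]? = some v) :
      FPred t vs aenv (.node (.param i) []) v
  | outSome {d : Δ} {rs : List (Rhs Δ Q)} {w : RTree Δ}
      (hw : RTree.Subtree w t) (hl : w.label = d)
      (h : ∀ i : Fin rs.length, FPred t vs aenv (rs.get i) w.children[i.val]?) :
      FPred t vs aenv (.node (.out d) rs) (some w)
  | outNone {d : Δ} {rs : List (Rhs Δ Q)} (us : List (V Δ))
      (hlen : us.length = rs.length)
      (hus : ∀ u ∈ us, InV t u)
      (h : ∀ i : Fin rs.length, FPred t vs aenv (rs.get i) (us.get (i.cast hlen.symm)))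
      (hno : ¬ ∃ w : RTree Δ, RTree.Subtree w t ∧ w.label = d ∧
          ∀ i : Fin rs.length, w.children[i.val]? = us.get (i.cast hlen.symm)) :
      FPred t vs aenv (.node (.out d) rs) none
  | call {q' : Q} {x : ℕ} {rs : List (Rhs Δ Q)} {v : V Δ} (us : List (V Δ))
      (hlen : us.length = rs.length)
      (ha : (q', us, v) ∈ aenv.getD x ∅)
      (h : ∀ i : Fin rs.length, FPred t vs aenv (rs.get i) (us.get (i.cast hlen.symm))) :
      FPred t vs aenv (.node (.call q' x) rs) v

/-- The run `run(s)` of the (on-the-fly constructed) inverse-type automaton of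
an IO-mtt on the input tree `s`, for the fixed output tree `t`:
`run(σ(s_1,…,s_k)) = {(q, v⃗, v') | ∃ r ∈ R_{q,σ}: f_{v⃗,(run(s_1),…,run(s_k))}(r, v')}`. -/
def runIO {Γ Δ Q : Type} (rankQ : Q → ℕ)
    (rsel : Q → Γ → List (RTree Γ) → Set (Rhs Δ Q)) (t : RTree Δ) :
    RTree Γ → Set (Trip Δ Q)
  | .node σ ss =>
      {trip | trip.2.1.length = rankQ trip.1 ∧ (∀ v ∈ trip.2.1, InV t v) ∧
        InV t trip.2.2 ∧
        ∃ r ∈ rsel trip.1 σ ss,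
          FPred t trip.2.1 (ss.attach.map (fun x => runIO rankQ rsel t x.1)) r trip.2.2}
decreasing_by
  have := List.sizeOf_lt_of_mem x.2
  simp only [RTree.node.sizeOf_spec]
  omega

end MttF

/-!
By induction on `s`, a triple `(q, ρ(t⃗), v)` with `t⃗` of length `rank q` lies in `run(s)` iff
some `u ∈ ⟦⟨q, s⟩(y₁, …, yₙ)⟧_IO` has `ρ(u[y⃗/t⃗]) = v`; the theorem is the case `q = q₀`,
`t⃗ = ()`, `v = t`. The inner induction on a right-hand side rests on two facts: `ρ(δ(u₁, …, u_k))`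
depends only on `δ` and the `ρ(uᵢ)`, which is what the `⊥`-clauses of `f` compute (this needs
`t` well-formed, so that a subtree with root `δ` has exactly `rank δ` children); and an IO-value of
`⟨q, s⟩` only contains the parameters `y₁, …, y_{rank q}`, so that nested parameter substitutions
compose.
-/

namespace List

variable {α β γ : Type*}

theorem forall₂_congr_of_mem {R S : α → β → Prop} {l₁ : List α} {l₂ : List β}
    (h : ∀ a ∈ l₁, ∀ b, R a b ↔ S a b) : Forall₂ R l₁ l₂ ↔ Forall₂ S l₁ l₂ := by
  induction l₁ generalizing l₂ with
  | nil => simp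
  | cons a l ih =>
    simp only [forall₂_cons_left_iff, h a mem_cons_self,
      ih fun a ha => h a (mem_cons_of_mem _ ha)]

theorem forall₂_exists_iff {R : α → γ → Prop} {f : γ → β} {l₁ : List α} {l₂ : List β} :
    Forall₂ (fun a b => ∃ c, R a c ∧ f c = b) l₁ l₂ ↔ ∃ l, Forall₂ R l₁ l ∧ l.map f = l₂ := by
  induction l₁ generalizing l₂ with
  | nil => simp [eq_comm]
  | cons a l ih =>
    simp only [forall₂_cons_left_iff, ih]
    constructor
    · rintro ⟨_, _, ⟨c, hc, rfl⟩, ⟨l', hl', rfl⟩, rfl⟩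
      exact ⟨c :: l', ⟨c, l', hc, hl', rfl⟩, rfl⟩
    · rintro ⟨_, ⟨c, l', hc, hl', rfl⟩, rfl⟩
      exact ⟨f c, l'.map f, ⟨c, hc, rfl⟩, ⟨l', hl', rfl⟩, rfl⟩

theorem map_eq_map_iff_forall₂ {f : α → γ} {g : β → γ} {l₁ : List α} {l₂ : List β} :
    l₁.map f = l₂.map g ↔ Forall₂ (fun a b => f a = g b) l₁ l₂ := by
  rw [← forall₂_eq_eq_eq, forall₂_map_left_iff, forall₂_map_right_iff]

theorem forall_fin_iff_forall₂ {R : α → β → Prop} {l₁ : List α} {l₂ : List β}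
    (h : l₂.length = l₁.length) :
    (∀ i : Fin l₁.length, R (l₁.get i) (l₂.get (i.cast h.symm))) ↔ Forall₂ R l₁ l₂ := by
  rw [forall₂_iff_get]
  exact ⟨fun H => ⟨h.symm, fun i h₁ _ => H ⟨i, h₁⟩⟩, fun H i => H.2 i i.2 _⟩

theorem forall_fin_getElem?_iff_forall₂ {R : α → Option β → Prop} {l₁ : List α} {l₂ : List β}
    (h : l₂.length = l₁.length) :
    (∀ i : Fin l₁.length, R (l₁.get i) l₂[i.val]?) ↔ Forall₂ R l₁ (l₂.map some) := by
  rw [← forall_fin_iff_forall₂ (by simpa using h)]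
  simp [h]

theorem Forall₂.forall_mem_right {P : α → Prop} {Q : β → Prop} {l₁ : List α} {l₂ : List β}
    (h : Forall₂ (fun a b => P a → Q b) l₁ l₂) (hP : ∀ a ∈ l₁, P a) : ∀ b ∈ l₂, Q b := by
  induction h with
  | nil => simp
  | cons hab _ ih =>
    simp only [mem_cons, forall_eq_or_imp] at hP ⊢
    exact ⟨hab hP.1, ih hP.2⟩

end List

namespace MttF

namespace RTree

variable {α β : Type}

@[elab_as_elim]
theorem induction {P : RTree α → Prop}
    (node : ∀ a ts, (∀ t ∈ ts, P t) → P (.node a ts)) : ∀ t, P t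
  | .node a ts => node a ts fun t _ => induction node t
decreasing_by
  have := List.sizeOf_lt_of_mem ‹t ∈ ts›
  simp only [RTree.node.sizeOf_spec]
  omega

@[simp]
theorem map_node (f : α → β) (a : α) (ts : List (RTree α)) :
    map f (.node a ts) = .node (f a) (ts.map (map f)) := by
  rw [map]; simp

theorem Subtree.trans {u v w : RTree α} (huv : Subtree u v) (hvw : Subtree v w) :
    Subtree u w := by
  induction hvw with
  | refl => exact huv
  | step hmem _ ih => exact .step hmem ih

theorem Subtree.of_mem_children {a : α} {c : RTree α} {ts : List (RTree α)} {t : RTree α}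
    (hc : c ∈ ts) (h : Subtree (.node a ts) t) : Subtree c t :=
  (Subtree.step hc (.refl c)).trans h

theorem Wf.length_children {rk : α → ℕ} {w : RTree α} (h : w.Wf rk) :
    w.children.length = rk w.label := by
  cases h with | node hlen _ => exact hlen

theorem Wf.of_subtree {rk : α → ℕ} {w t : RTree α} (h : Subtree w t) (ht : t.Wf rk) :
    w.Wf rk := by
  induction h with
  | refl => exact ht
  | step hmem _ ih => cases ht with | node _ hts => exact ih (hts _ hmem)

end RTree

variable {Γ Δ Q : Type}

@[simp]
theorem embed_node (a : Δ) (ts : List (RTree Δ)) :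
    embed (.node a ts) = .node (.out a) (ts.map embed) := by
  simp [embed]

theorem embed_eq (w : RTree Δ) : embed w = .node (.out w.label) (w.children.map embed) := by
  cases w; simp [RTree.label, RTree.children]

theorem embed_injective : Function.Injective (embed : RTree Δ → OT Δ) := by
  intro w
  induction w using RTree.induction with
  | node a ts ih =>
    rintro ⟨b, us⟩ heq
    simp only [embed_node, RTree.node.injEq, OLab.out.injEq] at heq
    obtain ⟨rfl, heq⟩ := heq
    rw [List.map_eq_map_iff_forall₂,
      List.forall₂_congr_of_mem fun a ha b => ⟨fun h => ih a ha h, congrArg embed⟩,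
      List.forall₂_eq_eq_eq] at heq
    rw [heq]

@[simp]
theorem substX_node (ss : List (RTree Γ)) (l : RLab Δ Q) (rs : List (Rhs Δ Q)) :
    substX ss (.node l rs) = .node (l.subst ss) (rs.map (substX ss)) := by
  simp [substX]

theorem RLab.subst_call {ss : List (RTree Γ)} {x : ℕ} (hx : x < ss.length) (q : Q) :
    (RLab.call q x : RLab Δ Q).subst ss = .call q ss[x] := by
  simp [RLab.subst, hx]

@[simp]
theorem substY_out (ts : List (OT Δ)) (d : Δ) (us : List (OT Δ)) :
    substY ts (.node (.out d) us) = .node (.out d) (us.map (substY ts)) := by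
  rw [substY]; simp

@[simp]
theorem substY_param (ts : List (OT Δ)) (i : ℕ) (us : List (OT Δ)) :
    substY ts (.node (.param i) us) = ts.getD i (.node (.param i) []) := by
  rw [substY]

theorem runIO_node (rankQ : Q → ℕ) (rsel : Q → Γ → List (RTree Γ) → Set (Rhs Δ Q))
    (t : RTree Δ) (σ : Γ) (ss : List (RTree Γ)) :
    runIO rankQ rsel t (.node σ ss) =
      {trip | trip.2.1.length = rankQ trip.1 ∧ (∀ v ∈ trip.2.1, InV t v) ∧
        InV t trip.2.2 ∧
        ∃ r ∈ rsel trip.1 σ ss,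
          FPred t trip.2.1 (ss.map (runIO rankQ rsel t)) r trip.2.2} := by
  rw [runIO]; simp

noncomputable def rho (t : RTree Δ) (u : OT Δ) : V Δ :=
  open Classical in
  if h : ∃ w, RTree.Subtree w t ∧ embed w = u then some h.choose else none

theorem rho_eq_some_iff {t w : RTree Δ} {u : OT Δ} :
    rho t u = some w ↔ RTree.Subtree w t ∧ embed w = u := by
  unfold rho
  split_ifs with h
  · rw [Option.some_inj]
    refine ⟨fun hw => hw ▸ h.choose_spec, fun hw => embed_injective ?_⟩
    rw [h.choose_spec.2, hw.2]
  · simp only [false_iff]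
    exact fun hw => h ⟨w, hw⟩

theorem rho_embed {t w : RTree Δ} (h : RTree.Subtree w t) : rho t (embed w) = some w :=
  rho_eq_some_iff.2 ⟨h, rfl⟩

theorem inV_rho (t : RTree Δ) (u : OT Δ) : InV t (rho t u) := by
  cases h : rho t u with
  | none => trivial
  | some w => exact (rho_eq_some_iff.1 h).1

theorem rho_param (t : RTree Δ) (i : ℕ) (us : List (OT Δ)) :
    rho t (.node (.param i) us) = none := by
  cases h : rho t _ with
  | none => rfl
  | some w =>
    obtain ⟨-, hw⟩ := rho_eq_some_iff.1 h
    cases w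
    simp at hw

def realize : V Δ → OT Δ
  | none => .node (.param 0) []
  | some w => embed w

theorem rho_realize {t : RTree Δ} {v : V Δ} (h : InV t v) : rho t (realize v) = v := by
  cases v with
  | none => exact rho_param t 0 []
  | some w => exact rho_embed h

theorem rho_out_eq_some_iff {t w : RTree Δ} {d : Δ} {l : List (OT Δ)} :
    rho t (.node (.out d) l) = some w ↔
      RTree.Subtree w t ∧ w.label = d ∧ l.map (rho t) = w.children.map some := by
  obtain ⟨a, cs⟩ := w
  simp only [rho_eq_some_iff, embed_node, RTree.node.injEq, OLab.out.injEq, RTree.label,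
    RTree.children]
  constructor
  · rintro ⟨hw, rfl, rfl⟩
    refine ⟨hw, rfl, ?_⟩
    rw [List.map_map]
    exact List.map_congr_left fun c hc => rho_embed (.of_mem_children hc hw)
  · rintro ⟨hw, rfl, hl⟩
    refine ⟨hw, rfl, ?_⟩
    rw [List.map_eq_map_iff_forall₂] at hl
    rw [← List.map_id l, List.map_eq_map_iff_forall₂]
    exact .flip (hl.imp fun _ _ h => (rho_eq_some_iff.1 h).2)

theorem rho_out_congr {t : RTree Δ} {d : Δ} {l₁ l₂ : List (OT Δ)}
    (h : l₁.map (rho t) = l₂.map (rho t)) :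
    rho t (.node (.out d) l₁) = rho t (.node (.out d) l₂) :=
  Option.ext fun _ => by simp only [rho_out_eq_some_iff, h]

inductive ParamsLT (m : ℕ) : OT Δ → Prop
  | out {d : Δ} {us : List (OT Δ)} (h : ∀ u ∈ us, ParamsLT m u) :
      ParamsLT m (.node (.out d) us)
  | param {i : ℕ} {us : List (OT Δ)} (h : i < m) : ParamsLT m (.node (.param i) us)

theorem substY_substY {A B : List (OT Δ)} {u : OT Δ} (h : ParamsLT B.length u) :
    substY A (substY B u) = substY (B.map (substY A)) u := by
  induction h with
  | out _ ih =>
    simp only [substY_out, List.map_map, RTree.node.injEq, true_and]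
    exact List.map_congr_left ih
  | param h =>
    rw [substY_param, substY_param, List.getD_eq_getElem _ _ h,
      List.getD_eq_getElem _ _ (by simpa using h), List.getElem_map]

theorem ParamsLT.substY {m : ℕ} {B : List (OT Δ)} (hB : ∀ b ∈ B, ParamsLT m b)
    {u : OT Δ} (h : ParamsLT B.length u) : ParamsLT m (substY B u) := by
  induction h with
  | out _ ih =>
    rw [substY_out]
    exact .out fun _ hu => by obtain ⟨c, hc, rfl⟩ := List.mem_map.1 hu; exact ih c hc
  | param h =>
    rw [substY_param, List.getD_eq_getElem _ _ h]
    exact hB _ (List.getElem_mem h)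

inductive CallsWf (rankΓ : Γ → ℕ) (rankQ : Q → ℕ) (m : ℕ) : ST Γ Δ Q → Prop
  | out {d : Δ} {us : List (ST Γ Δ Q)} (h : ∀ u ∈ us, CallsWf rankΓ rankQ m u) :
      CallsWf rankΓ rankQ m (.node (.out d) us)
  | call {q : Q} {s : RTree Γ} {us : List (ST Γ Δ Q)}
      (hs : s.Wf rankΓ) (hlen : us.length = rankQ q)
      (h : ∀ u ∈ us, CallsWf rankΓ rankQ m u) :
      CallsWf rankΓ rankQ m (.node (.call q s) us)
  | param {i : ℕ} {us : List (ST Γ Δ Q)} (h : i < m) :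
      CallsWf rankΓ rankQ m (.node (.param i) us)

theorem CallsWf.substX {rankΓ : Γ → ℕ} {rankΔ : Δ → ℕ} {rankQ : Q → ℕ} {m : ℕ}
    {ss : List (RTree Γ)} (hss : ∀ s ∈ ss, s.Wf rankΓ) {r : Rhs Δ Q}
    (hr : RhsWf rankΔ rankQ ss.length m r) : CallsWf rankΓ rankQ m (substX ss r) := by
  induction hr with
  | out _ _ ih =>
    rw [substX_node]
    exact .out fun _ hu => by obtain ⟨c, hc, rfl⟩ := List.mem_map.1 hu; exact ih c hc
  | call hx hlen _ ih =>
    rw [substX_node, RLab.subst_call hx]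
    refine .call (hss _ (List.getElem_mem hx)) (by simpa using hlen) fun _ hu => ?_
    obtain ⟨c, hc, rfl⟩ := List.mem_map.1 hu
    exact ih c hc
  | param hi => rw [substX_node]; exact .param hi

theorem MTT.rhsWf_of_mem_rules {M : MTT Γ Δ Q} {q : Q} {σ : Γ} {ss : List (RTree Γ)}
    {r : Rhs Δ Q} (hs : (RTree.node σ ss).Wf M.rankΓ) (hr : r ∈ M.rules q σ) :
    RhsWf M.rankΔ M.rankQ ss.length (M.rankQ q) r := by
  cases hs with | node hlen _ => exact hlen ▸ M.rules_wf q σ r hr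

theorem SemIO.paramsLT {M : MTT Γ Δ Q} {u : ST Γ Δ Q} {t' : OT Δ} (h : SemIO M.sel u t')
    {m : ℕ} (hu : CallsWf M.rankΓ M.rankQ m u) : ParamsLT m t' := by
  induction h generalizing m with
  | param i => cases hu with | param h => exact .param h
  | out hlen _ ih =>
    cases hu with
    | out h =>
      exact .out (((List.forall_fin_iff_forall₂ hlen).1 fun i => @ih i m).forall_mem_right h)
  | @call q σ ss us r t₀ ts hr _ hlen _ ih₀ ih =>
    cases hu with
    | call hs hlenq h =>
      have hss : ∀ s ∈ ss, s.Wf M.rankΓ := by cases hs with | node _ hss => exact hss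
      have h₀ : ParamsLT (M.rankQ q) t₀ := ih₀ (.substX hss (M.rhsWf_of_mem_rules hs hr))
      refine .substY ?_ (by rwa [hlen, hlenq])
      exact ((List.forall_fin_iff_forall₂ hlen).1 fun i => @ih i m).forall_mem_right h

section SemIO

variable {rsel : Q → Γ → List (RTree Γ) → Set (Rhs Δ Q)}

theorem semIO_param_iff {i : ℕ} {us : List (ST Γ Δ Q)} {t' : OT Δ} :
    SemIO rsel (.node (.param i) us) t' ↔ us = [] ∧ t' = .node (.param i) [] := by
  constructor
  · rintro ⟨⟩; exact ⟨rfl, rfl⟩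
  · rintro ⟨rfl, rfl⟩; exact .param i

theorem semIO_out_iff {d : Δ} {us : List (ST Γ Δ Q)} {t' : OT Δ} :
    SemIO rsel (.node (.out d) us) t' ↔
      ∃ ts, List.Forall₂ (SemIO rsel) us ts ∧ t' = .node (.out d) ts := by
  constructor
  · rintro (_ | ⟨hlen, h⟩)
    exact ⟨_, (List.forall_fin_iff_forall₂ hlen).1 h, rfl⟩
  · rintro ⟨ts, h, rfl⟩
    have hlen := h.length_eq.symm
    exact .out hlen ((List.forall_fin_iff_forall₂ hlen).2 h)

theorem semIO_call_iff {q : Q} {σ : Γ} {ss : List (RTree Γ)} {us : List (ST Γ Δ Q)}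
    {t' : OT Δ} :
    SemIO rsel (.node (.call q (.node σ ss)) us) t' ↔
      ∃ r ∈ rsel q σ ss, ∃ t₀, SemIO rsel (substX ss r) t₀ ∧
        ∃ ts, List.Forall₂ (SemIO rsel) us ts ∧ t' = substY ts t₀ := by
  constructor
  · rintro (_ | _ | ⟨hr, h₀, hlen, h⟩)
    exact ⟨_, hr, _, h₀, _, (List.forall_fin_iff_forall₂ hlen).1 h, rfl⟩
  · rintro ⟨r, hr, t₀, h₀, ts, h, rfl⟩
    have hlen := h.length_eq.symm
    exact .call hr h₀ hlen ((List.forall_fin_iff_forall₂ hlen).2 h)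

end SemIO

section FPred

variable {t : RTree Δ} {vs : List (V Δ)} {aenv : List (Set (Trip Δ Q))}

theorem fPred_param_iff {i : ℕ} {v : V Δ} :
    FPred t vs aenv (.node (.param i) []) v ↔ vs[i]? = some v :=
  ⟨fun h => by cases h with | param h => exact h, .param⟩

theorem fPred_call_iff {q : Q} {x : ℕ} {rs : List (Rhs Δ Q)} {v : V Δ} :
    FPred t vs aenv (.node (.call q x) rs) v ↔
      ∃ us, (q, us, v) ∈ aenv.getD x ∅ ∧ List.Forall₂ (FPred t vs aenv) rs us := by
  constructor
  · rintro (_ | _ | _ | ⟨us, hlen, ha, h⟩)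
    exact ⟨us, ha, (List.forall_fin_iff_forall₂ hlen).1 h⟩
  · rintro ⟨us, ha, h⟩
    have hlen := h.length_eq.symm
    exact .call us hlen ha ((List.forall_fin_iff_forall₂ hlen).2 h)

theorem FPred.exists_of_out {d : Δ} {rs : List (Rhs Δ Q)} {v : V Δ}
    {rk : Δ → ℕ} (ht : t.Wf rk) (hrs : rs.length = rk d)
    (h : FPred t vs aenv (.node (.out d) rs) v) :
    ∃ l : List (OT Δ), List.Forall₂ (FPred t vs aenv) rs (l.map (rho t)) ∧
      rho t (.node (.out d) l) = v := by
  cases h with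
  | @outSome _ _ w hw hl h =>
    subst hl
    have hchildren := (rho_out_eq_some_iff.1 (embed_eq w ▸ rho_embed hw)).2.2
    refine ⟨w.children.map embed, ?_, embed_eq w ▸ rho_embed hw⟩
    rw [hchildren, ← List.forall_fin_getElem?_iff_forall₂]
    · exact h
    · rw [(ht.of_subtree hw).length_children, hrs]
  | outNone us hlen hus h hno =>
    have hus : (us.map realize).map (rho t) = us := by
      rw [List.map_map]
      exact (List.map_congr_left fun u hu => rho_realize (hus u hu)).trans (List.map_id' us)
    refine ⟨us.map realize, by rwa [hus, ← List.forall_fin_iff_forall₂ hlen], ?_⟩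
    cases hv : rho t (.node (.out d) (us.map realize)) with
    | none => rfl
    | some w =>
      obtain ⟨hw, hlab, hch⟩ := rho_out_eq_some_iff.1 hv
      rw [hus] at hch
      exact absurd ⟨w, hw, hlab, fun i => by simp [hch]⟩ hno

theorem FPred.out_of_rho {d : Δ} {rs : List (Rhs Δ Q)} {l : List (OT Δ)}
    {rk : Δ → ℕ} (ht : t.Wf rk) (hrs : rs.length = rk d)
    (h : List.Forall₂ (FPred t vs aenv) rs (l.map (rho t))) :
    FPred t vs aenv (.node (.out d) rs) (rho t (.node (.out d) l)) := by
  cases hv : rho t (.node (.out d) l) with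
  | some w =>
    obtain ⟨hw, rfl, hl⟩ := rho_out_eq_some_iff.1 hv
    rw [hl] at h
    have hlen : w.children.length = rs.length := by simpa using h.length_eq.symm
    exact .outSome hw rfl ((List.forall_fin_getElem?_iff_forall₂ hlen).2 h)
  | none =>
    have hlen : (l.map (rho t)).length = rs.length := h.length_eq.symm
    refine .outNone _ hlen ?_ ((List.forall_fin_iff_forall₂ hlen).2 h) ?_
    · simp only [List.mem_map]
      rintro _ ⟨u, -, rfl⟩
      exact inV_rho t u
    · rintro ⟨w, hw, rfl, hch⟩
      have hwlen : w.children.length = rs.length := by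
        rw [(ht.of_subtree hw).length_children, hrs]
      have hl : l.map (rho t) = w.children.map some := by
        refine List.ext_getElem (by simp_all) fun i hi hi' => ?_
        have := (hch ⟨i, by simp_all⟩).symm
        simpa [List.getElem?_eq_getElem (by simpa using hi')] using this
      exact absurd (rho_out_eq_some_iff.2 ⟨hw, rfl, hl⟩) (by simp [hv])

theorem fPred_out_iff {d : Δ} {rs : List (Rhs Δ Q)} {v : V Δ} {rk : Δ → ℕ} (ht : t.Wf rk)
    (hrs : rs.length = rk d) :
    FPred t vs aenv (.node (.out d) rs) v ↔
      ∃ l : List (OT Δ), List.Forall₂ (FPred t vs aenv) rs (l.map (rho t)) ∧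
        rho t (.node (.out d) l) = v :=
  ⟨FPred.exists_of_out ht hrs, fun ⟨_, h, hv⟩ => hv ▸ FPred.out_of_rho ht hrs h⟩

end FPred

/-- `RhoEvalIO M t q s ts v`: some `u ∈ ⟦⟨q, s⟩(y₁, …, yₙ)⟧_IO` has `ρ(u[y⃗/ts]) = v`. -/
def RhoEvalIO (M : MTT Γ Δ Q) (t : RTree Δ) (q : Q) (s : RTree Γ) (ts : List (OT Δ))
    (v : V Δ) : Prop :=
  ∃ r ∈ M.rules q s.label, ∃ t₀, SemIO M.sel (substX s.children r) t₀ ∧ rho t (substY ts t₀) = v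

section Correctness

variable {M : MTT Γ Δ Q} {t : RTree Δ} {ss : List (RTree Γ)} {ts : List (OT Δ)}

theorem rhoEvalIO_map_substY {s : RTree Γ} (hs : s.Wf M.rankΓ) {q : Q} {ts' : List (OT Δ)}
    (hts' : ts'.length = M.rankQ q) {v : V Δ} :
    RhoEvalIO M t q s (ts'.map (substY ts)) v ↔
      ∃ r ∈ M.rules q s.label, ∃ t₀, SemIO M.sel (substX s.children r) t₀ ∧
        rho t (substY ts (substY ts' t₀)) = v := by
  obtain ⟨σ, ss⟩ := s
  have hss : ∀ s ∈ ss, s.Wf M.rankΓ := by cases hs with | node _ h => exact h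
  unfold RhoEvalIO
  refine exists_congr fun r => and_congr_right fun hr =>
    exists_congr fun t₀ => and_congr_right fun h₀ => ?_
  rw [substY_substY (hts' ▸ h₀.paramsLT (.substX hss (M.rhsWf_of_mem_rules hs hr)))]

theorem fPred_out_iff_exists_semIO (ht : t.Wf M.rankΔ) {d : Δ} {rs : List (Rhs Δ Q)}
    (hrs : rs.length = M.rankΔ d)
    (ihr : ∀ r ∈ rs, ∀ {v : V Δ}, FPred t (ts.map (rho t)) (ss.map (runIO M.rankQ M.sel t)) r v ↔
      ∃ t₀, SemIO M.sel (substX ss r) t₀ ∧ rho t (substY ts t₀) = v) {v : V Δ} :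
    FPred t (ts.map (rho t)) (ss.map (runIO M.rankQ M.sel t)) (.node (.out d) rs) v ↔
      ∃ t₀, SemIO M.sel (substX ss (.node (.out d) rs)) t₀ ∧ rho t (substY ts t₀) = v := by
  simp only [fPred_out_iff ht hrs, List.forall₂_congr_of_mem fun r hr _ => ihr r hr,
    List.forall₂_exists_iff, substX_node, RLab.subst, semIO_out_iff, List.forall₂_map_left_iff]
  constructor
  · rintro ⟨l, ⟨ts', hS, hl⟩, rfl⟩
    refine ⟨_, ⟨ts', hS, rfl⟩, ?_⟩
    rw [substY_out]
    exact rho_out_congr (by rw [List.map_map]; exact hl)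
  · rintro ⟨_, ⟨ts', hS, rfl⟩, rfl⟩
    exact ⟨ts'.map (substY ts), ⟨ts', hS, by rw [List.map_map]; rfl⟩, by rw [substY_out]⟩

theorem fPred_call_iff_exists_semIO (hss : ∀ s ∈ ss, s.Wf M.rankΓ)
    (ih : ∀ s ∈ ss, ∀ q (ts : List (OT Δ)) v, ts.length = M.rankQ q →
      ((q, ts.map (rho t), v) ∈ runIO M.rankQ M.sel t s ↔ RhoEvalIO M t q s ts v))
    {q : Q} {x : ℕ} {rs : List (Rhs Δ Q)} (hx : x < ss.length) (hrs : rs.length = M.rankQ q)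
    (ihr : ∀ r ∈ rs, ∀ {v : V Δ}, FPred t (ts.map (rho t)) (ss.map (runIO M.rankQ M.sel t)) r v ↔
      ∃ t₀, SemIO M.sel (substX ss r) t₀ ∧ rho t (substY ts t₀) = v) {v : V Δ} :
    FPred t (ts.map (rho t)) (ss.map (runIO M.rankQ M.sel t)) (.node (.call q x) rs) v ↔
      ∃ t₀, SemIO M.sel (substX ss (.node (.call q x) rs)) t₀ ∧ rho t (substY ts t₀) = v := by
  obtain ⟨σ', ss', hsx⟩ : ∃ σ' ss', ss[x] = .node σ' ss' := by
    cases ss[x]; exact ⟨_, _, rfl⟩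
  have hmem : RTree.node σ' ss' ∈ ss := hsx ▸ List.getElem_mem hx
  have hrun : (ss.map (runIO M.rankQ M.sel t)).getD x ∅ = runIO M.rankQ M.sel t ss[x] := by
    rw [List.getD_eq_getElem _ _ (by simpa using hx), List.getElem_map]
  have hmap (ts' : List (OT Δ)) :
      ts'.map (fun t₀ => rho t (substY ts t₀)) = (ts'.map (substY ts)).map (rho t) := by
    rw [List.map_map]; rfl
  have heval {ts' : List (OT Δ)} (hts' : ts'.length = rs.length) {v : V Δ} :=
    (ih _ hmem q (ts'.map (substY ts)) v (by rw [List.length_map, hts', hrs])).trans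
      (rhoEvalIO_map_substY (hss _ hmem) (hts'.trans hrs))
  simp only [fPred_call_iff, hrun, hsx, List.forall₂_congr_of_mem fun r hr _ => ihr r hr,
    List.forall₂_exists_iff, substX_node, RLab.subst_call hx, semIO_call_iff,
    List.forall₂_map_left_iff]
  constructor
  · rintro ⟨_, hrun, ts', hS, rfl⟩
    obtain ⟨r', hr', t₀, h₀, rfl⟩ := (heval hS.length_eq.symm).1 (hmap ts' ▸ hrun)
    exact ⟨_, ⟨r', hr', t₀, h₀, ts', hS, rfl⟩, rfl⟩
  · rintro ⟨_, ⟨r', hr', t₀, h₀, ts', hS, rfl⟩, rfl⟩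
    exact ⟨_, hmap ts' ▸ (heval hS.length_eq.symm).2 ⟨r', hr', t₀, h₀, rfl⟩, ts', hS, rfl⟩

theorem fPred_iff_exists_semIO (ht : t.Wf M.rankΔ) (hss : ∀ s ∈ ss, s.Wf M.rankΓ)
    (ih : ∀ s ∈ ss, ∀ q (ts : List (OT Δ)) v, ts.length = M.rankQ q →
      ((q, ts.map (rho t), v) ∈ runIO M.rankQ M.sel t s ↔ RhoEvalIO M t q s ts v))
    {r : Rhs Δ Q} (hr : RhsWf M.rankΔ M.rankQ ss.length ts.length r) {v : V Δ} :
    FPred t (ts.map (rho t)) (ss.map (runIO M.rankQ M.sel t)) r v ↔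
      ∃ t₀, SemIO M.sel (substX ss r) t₀ ∧ rho t (substY ts t₀) = v := by
  induction hr generalizing v with
  | out hrs _ ihr => exact fPred_out_iff_exists_semIO ht hrs ihr
  | call hx hrs _ ihr => exact fPred_call_iff_exists_semIO hss ih hx hrs ihr
  | @param i hi =>
    simp [fPred_param_iff, RLab.subst, semIO_param_iff, hi]

theorem mem_runIO_iff (ht : t.Wf M.rankΔ) {s : RTree Γ} (hs : s.Wf M.rankΓ) {q : Q}
    (hlen : ts.length = M.rankQ q) {v : V Δ} :
    (q, ts.map (rho t), v) ∈ runIO M.rankQ M.sel t s ↔ RhoEvalIO M t q s ts v := by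
  induction s using RTree.induction generalizing q ts v with
  | node σ ss ih =>
    have hss : ∀ s ∈ ss, s.Wf M.rankΓ := by cases hs with | node _ h => exact h
    have hF {r} (hr : r ∈ M.rules q σ) :=
      fPred_iff_exists_semIO (v := v) ht hss (fun s hs' _ _ _ hl => ih s hs' (hss s hs') hl)
        (hlen ▸ M.rhsWf_of_mem_rules hs hr)
    simp only [runIO_node, Set.mem_ofPred_eq, List.length_map, hlen, true_and, RhoEvalIO,
      RTree.label, RTree.children]
    constructor
    · rintro ⟨-, -, r, hr, h⟩
      exact ⟨r, hr, (hF hr).1 h⟩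
    · rintro ⟨r, hr, h⟩
      refine ⟨fun v hv => ?_, ?_, r, hr, (hF hr).2 h⟩
      · obtain ⟨u, -, rfl⟩ := List.mem_map.1 hv
        exact inV_rho t u
      · obtain ⟨t₀, -, rfl⟩ := h
        exact inV_rho t _

end Correctness

/-- For every `s ∈ T_Σ`: `(s,t) ∈ τ_{IO,M}` iff the triple
`(q0, (), t)` — with the empty parameter vector and target `t` itself (the root
subtree of `t`) — belongs to `run(s)`. -/
theorem translation_membership_iff_runIO {Γ Δ Q : Type}
    [Fintype Γ] [Fintype Δ] [Fintype Q]
    (M : MTT Γ Δ Q) (t : RTree Δ) (ht : t.Wf M.rankΔ)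
    (s : RTree Γ) (hs : s.Wf M.rankΓ) :
    (s, t) ∈ tauIO M.rankΓ M.rankΔ M.sel M.q₀ ↔
      (M.q₀, ([] : List (V Δ)), some t) ∈ runIO M.rankQ M.sel t s := by
  rw [← List.map_nil (f := rho t), mem_runIO_iff ht hs (M.q₀_rank ▸ rfl)]
  obtain ⟨σ, ss⟩ := s
  simp only [tauIO, Set.mem_ofPred_eq, hs, ht, true_and, semIO_call_iff,
    List.forall₂_nil_left_iff, exists_eq_left, RhoEvalIO, rho_eq_some_iff, RTree.Subtree.refl,
    RTree.label, RTree.children, MTT.sel, plainSel]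

end MttF
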